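/- arXiv:1210.5648 — 2 statements merged into one kernel-verified Lean document; each statement's English description precedes it below -/
import Mathlib

section
/- Let x be uniform on Z_3 and let (y,z) be distributed, conditioned on x = a, uniformly over the six pairs (a,a+1), (a,a+2), (a+1,a), (a+1,a+1), (a+2,a), (a+2,a+2). Then for β, γ ∈ Z_3: E[ω^{βy + γz} | x = a] equals (−1/2)^{[β≠0]}·ω^{2aβ} if β = γ, and equals 0 if β ≠ γ. -/
open Finset

noncomputable def ω : ℂ := Complex.exp (2 * Real.pi * Complex.I / 3)

/-!
Sum the character `(y, z) ↦ ω^{βy+γz}` over all nine pairs and subtract the three missing ones,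
which form the antidiagonal `y + z = 2a`. The full sum factors as `(∑_y ω^{βy})(∑_z ω^{γz})`,
which is `9` if `β = γ = 0` and `0` otherwise; along the antidiagonal `ω^{βy+γz} = ω^{2aγ}ω^{(β-γ)y}`,
which sums to `3ω^{2aγ}` if `β = γ` and to `0` otherwise.
-/

namespace AddChar

variable {R R' : Type*} [CommRing R] [Fintype R] [DecidableEq R] [CommRing R'] [IsDomain R']
  {ψ : AddChar R R'}

theorem sum_prod_linear (hψ : ψ.IsPrimitive) (β γ : R) :
    ∑ p : R × R, ψ (β * p.1 + γ * p.2) =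
      if β = 0 ∧ γ = 0 then (Fintype.card R : R') ^ 2 else 0 := by
  simp only [Fintype.sum_prod_type, map_add_eq_mul, ← Finset.mul_sum, ← Finset.sum_mul]
  simp only [mul_comm β, mul_comm γ, sum_mulShift _ hψ, Nat.cast_ite, Nat.cast_zero,
    ite_zero_mul_ite_zero, sq]

theorem sum_antidiagonal_linear (hψ : ψ.IsPrimitive) (c β γ : R) :
    ∑ p ∈ univ.filter (fun p : R × R => p.1 + p.2 = c), ψ (β * p.1 + γ * p.2) =
      if β = γ then Fintype.card R * ψ (γ * c) else 0 := by
  have hshift (y : R) : ψ (β * y + γ * (c - y)) = ψ (y * (β - γ)) * ψ (γ * c) := by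
    rw [← map_add_eq_mul]; congr 1; ring
  rw [Finset.sum_filter, Fintype.sum_prod_type]
  simp only [← eq_sub_iff_add_eq', Finset.sum_ite_eq', Finset.mem_univ, if_true, hshift,
    ← Finset.sum_mul, sum_mulShift _ hψ, sub_eq_zero, Nat.cast_ite, Nat.cast_zero, ite_mul,
    zero_mul]

theorem sum_off_antidiagonal_linear (hψ : ψ.IsPrimitive) (c β γ : R) :
    ∑ p ∈ univ.filter (fun p : R × R => p.1 + p.2 ≠ c), ψ (β * p.1 + γ * p.2) =
      (if β = 0 ∧ γ = 0 then (Fintype.card R : R') ^ 2 else 0) -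
        if β = γ then Fintype.card R * ψ (γ * c) else 0 := by
  rw [← sum_prod_linear hψ, ← sum_antidiagonal_linear hψ c,
    ← Finset.sum_filter_add_sum_filter_not univ (fun p : R × R => p.1 + p.2 = c)]
  ring

end AddChar

theorem isPrimitiveRoot_ω : IsPrimitiveRoot ω 3 := by
  simpa [ω] using Complex.isPrimitiveRoot_exp 3 (by norm_num)

/-- With `(y,z)` uniform on the six pairs `(a,a+1),(a,a+2),(a+1,a),(a+1,a+1),(a+2,a),(a+2,a+2)`,
`E[ω^{βy+γz}]` equals `(-1/2)^{[β≠0]}·ω^{2aβ}` if `β = γ`, and `0` otherwise. -/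
theorem stmt7 (a β γ : ZMod 3) :
    ([(a, a+1), (a, a+2), (a+1, a), (a+1, a+1), (a+2, a), (a+2, a+2)].map
        (fun p : ZMod 3 × ZMod 3 => ω ^ (β * p.1 + γ * p.2).val)).sum / 6
      = if β = γ then (if β = 0 then 1 else (-(1 : ℂ)/2)) * ω ^ (2 * a * β).val
        else 0 := by
  have hζ := isPrimitiveRoot_ω
  have hpairs : ∀ a : ZMod 3,
      [(a, a+1), (a, a+2), (a+1, a), (a+1, a+1), (a+2, a), (a+2, a+2)].Nodup ∧
      [(a, a+1), (a, a+2), (a+1, a), (a+1, a+1), (a+2, a), (a+2, a+2)].toFinset =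
        univ.filter (fun p : ZMod 3 × ZMod 3 => p.1 + p.2 ≠ 2 * a) := by decide
  obtain ⟨hnodup, hfinset⟩ := hpairs a
  simp only [← AddChar.zmodChar_apply hζ.pow_eq_one]
  rw [← List.sum_toFinset _ hnodup, hfinset,
    AddChar.sum_off_antidiagonal_linear (AddChar.zmodChar_primitive_of_primitive_root 3 hζ),
    ZMod.card]
  rcases eq_or_ne β γ with rfl | hβγ
  · rw [mul_comm β]
    by_cases hβ : β = 0
    · norm_num [hβ]
    · simp only [hβ, false_and, if_false, if_true, Nat.cast_ofNat]; ring
  · have hnot : ¬(β = 0 ∧ γ = 0) := fun h => hβγ (h.1.trans h.2.symm)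
    simp [hβγ, hnot]
end

section
/- Let K be a positive integer, d ≥ 1, L = dK, with blocks: for j ∈ [L], π(j) = ⌈j/d⌉. Let x be uniform on Z_3^K and, conditionally on x, for each j independently let (y_j, z_j) be uniform on the six pairs (a,a+1),(a,a+2),(a+1,a),(a+1,a+1),(a+2,a),(a+2,a+2) where a = x_{π(j)}. Then for any f₁ : Z_3^K → ℝ and g₁, g₂ : Z_3^L → ℝ, E[f₁(x)g₁(y)g₂(z)] = Σ_{α ∈ Z_3^L} f̂₁(π₃(α))·ĝ₁(α)·ĝ₂(α)·(−1/2)^{#α}, where π₃(α) ∈ Z_3^K has i-th coordinate Σ_{j: π(j)=i} α_j mod 3, and #α is the number of nonzero coordinates of α. -/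
open Finset

/-- Fourier coefficient of `f : Z_3^ι → ℂ` at `α`: `E_x[f(x) · conj(ω^{α·x})]`. -/
noncomputable def fhat {ι : Type*} [Fintype ι] [DecidableEq ι] (f : (ι → ZMod 3) → ℂ)
    (α : ι → ZMod 3) : ℂ :=
  (∑ x : ι → ZMod 3, f x * (starRingEnd ℂ) (ω ^ (∑ i, α i * x i).val)) /
    (Fintype.card (ι → ZMod 3) : ℂ)

/-- The projection `π₃(α) ∈ Z_3^K`, whose `i`-th coordinate is the sum of block `i` of `α`. -/
def pi3 {K d : ℕ} (α : Fin K × Fin d → ZMod 3) : Fin K → ZMod 3 :=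
  fun i => ∑ j, α (i, j)

/-- `#α`: number of nonzero coordinates of `α`. -/
def nsupp {ι : Type*} [Fintype ι] (α : ι → ZMod 3) : ℕ :=
  (univ.filter (fun i => α i ≠ 0)).card

/-- The test distribution's joint pmf: `x` uniform on `Z_3^K`, and independently per coordinate
`(i,j)`, `(y_{ij}, z_{ij})` uniform over the six pairs with `y_{ij} + z_{ij} ≠ 2·x_i`,
i.e. the pairs `(a,a+1),(a,a+2),(a+1,a),(a+1,a+1),(a+2,a),(a+2,a+2)` for `a = x_i`. -/
noncomputable def wt {K d : ℕ} (x : Fin K → ZMod 3) (y z : Fin K × Fin d → ZMod 3) : ℝ :=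
  (1 / 3 ^ K) * ∏ p : Fin K × Fin d, (if y p + z p = 2 * x p.1 then (0 : ℝ) else 1/6)

/-!
Expanding the three Fourier coefficients writes the right-hand side as
`∑ x y z, f₁ x · g₁ y · g₂ z · k(x, y, z)` with
`k(x, y, z) = 3^{-K} 9^{-Kd} ∑_α ω^{-(π₃(α)·x + α·y + α·z)} (-1/2)^{#α}`.
Since `π₃(α)·x = ∑_{(i,j)} α_{ij} x_i`, the kernel factors over the coordinates `(i,j)`, and with
`c(0) = 1`, `c(a) = -1/2` otherwise, orthogonality of characters gives
`∑_a ω^{a t} c(a) = 3/2 - (3/2)·[t = 0]`. For `t = -(x_i + y_{ij} + z_{ij})` this is `9` times the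
factor `(1/6)·[y_{ij} + z_{ij} ≠ 2 x_i]` of the distribution, so `k = wt`.
-/

open ZMod (stdAddChar)

lemma AddChar.map_sum_eq_prod {ι A M : Type*} [AddCommMonoid A] [CommMonoid M]
    (ψ : AddChar A M) (s : Finset ι) (f : ι → A) : ψ (∑ i ∈ s, f i) = ∏ i ∈ s, ψ (f i) := by
  classical
  induction s using Finset.induction_on with
  | empty => simp
  | insert i s hi ih => rw [sum_insert hi, prod_insert hi, AddChar.map_add_eq_mul, ih]

lemma Finset.sum_mul_sum_mul_sum {ι κ μ R : Type*} [CommSemiring R] (s : Finset ι)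
    (t : Finset κ) (u : Finset μ) (f : ι → R) (g : κ → R) (h : μ → R) :
    (∑ i ∈ s, f i) * (∑ j ∈ t, g j) * (∑ k ∈ u, h k)
      = ∑ i ∈ s, ∑ j ∈ t, ∑ k ∈ u, f i * g j * h k := by
  rw [sum_mul_sum, sum_mul]
  exact sum_congr rfl fun i _ => sum_mul_sum _ _ _ _

lemma omega_pow_val (a : ZMod 3) : ω ^ a.val = stdAddChar a := by
  rw [ZMod.stdAddChar_apply, ZMod.toCircle_apply, ω, ← Complex.exp_nat_mul]
  congr 1
  push_cast
  ring

lemma conj_omega_pow_val (a : ZMod 3) : starRingEnd ℂ (ω ^ a.val) = stdAddChar (-a) := by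
  rw [omega_pow_val, AddChar.map_neg_eq_conj]

lemma fhat_eq_sum_stdAddChar {ι : Type*} [Fintype ι] [DecidableEq ι] (f : (ι → ZMod 3) → ℂ)
    (α : ι → ZMod 3) :
    fhat f α = (∑ x, f x * stdAddChar (-∑ i, α i * x i)) / 3 ^ Fintype.card ι := by
  simp [fhat, conj_omega_pow_val, ZMod.card]

lemma neg_half_pow_nsupp {ι : Type*} [Fintype ι] (α : ι → ZMod 3) :
    (-(1 : ℂ) / 2) ^ nsupp α = ∏ i, if α i = 0 then 1 else -1 / 2 := by
  rw [prod_ite, prod_const_one, one_mul, prod_const, nsupp]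

lemma sum_stdAddChar_mul_ite (s : ZMod 3) :
    ∑ a : ZMod 3, stdAddChar (a * s) * (if a = 0 then 1 else -1 / 2 : ℂ)
      = if s = 0 then 0 else 3 / 2 := by
  have hsplit : ∀ a : ZMod 3, stdAddChar (a * s) * (if a = 0 then 1 else -1 / 2 : ℂ)
      = (if a = 0 then 3 / 2 else 0) - stdAddChar (a * s) / 2 := by
    intro a
    split_ifs with ha
    · rw [ha, zero_mul, AddChar.map_zero_eq_one]
      norm_num
    · ring
  rw [sum_congr rfl fun a _ => hsplit a, sum_sub_distrib, ← sum_div,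
    AddChar.sum_mulShift s (ZMod.isPrimitive_stdAddChar 3), Fintype.sum_ite_eq']
  split_ifs <;> norm_num

lemma sum_stdAddChar_mul_neg_half_pow_nsupp {ι : Type*} [Fintype ι] [DecidableEq ι]
    (s : ι → ZMod 3) :
    ∑ α : ι → ZMod 3, stdAddChar (∑ i, α i * s i) * (-(1 : ℂ) / 2) ^ nsupp α
      = ∏ i, if s i = 0 then 0 else 3 / 2 := by
  simp_rw [AddChar.map_sum_eq_prod, neg_half_pow_nsupp, ← prod_mul_distrib,
    ← sum_stdAddChar_mul_ite]
  exact (Fintype.prod_sum fun i a => stdAddChar (a * s i) * (if a = 0 then 1 else -1 / 2 : ℂ)).symm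

lemma sum_pi3_mul {K d : ℕ} (α : Fin K × Fin d → ZMod 3) (x : Fin K → ZMod 3) :
    ∑ i, pi3 α i * x i = ∑ p, α p * x p.1 := by
  simp [pi3, Fintype.sum_prod_type, sum_mul]

lemma neg_add_add_eq_zero_iff (a b c : ZMod 3) : -(a + b + c) = 0 ↔ b + c = 2 * a := by
  revert a b c
  decide

lemma wt_eq_sum {K d : ℕ} (x : Fin K → ZMod 3) (y z : Fin K × Fin d → ZMod 3) :
    (wt x y z : ℂ) = (3 ^ K * 9 ^ (K * d))⁻¹ * ∑ α,
      stdAddChar (-∑ i, pi3 α i * x i) * stdAddChar (-∑ p, α p * y p)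
        * stdAddChar (-∑ p, α p * z p) * (-(1 : ℂ) / 2) ^ nsupp α := by
  have hchar : ∀ α : Fin K × Fin d → ZMod 3,
      stdAddChar (-∑ i, pi3 α i * x i) * stdAddChar (-∑ p, α p * y p)
        * stdAddChar (-∑ p, α p * z p) = stdAddChar (∑ p, α p * -(x p.1 + y p + z p)) := by
    intro α
    rw [← AddChar.map_add_eq_mul, ← AddChar.map_add_eq_mul, sum_pi3_mul]
    simp only [mul_neg, mul_add, sum_neg_distrib, sum_add_distrib, neg_add]
  have hfactor : ∀ p : Fin K × Fin d, (if y p + z p = 2 * x p.1 then 0 else 3 / 2 : ℂ)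
      = 9 * if y p + z p = 2 * x p.1 then 0 else 1 / 6 := by
    intro p; split_ifs <;> norm_num
  simp_rw [hchar, sum_stdAddChar_mul_neg_half_pow_nsupp, neg_add_add_eq_zero_iff, hfactor, prod_mul_distrib,
    prod_const, card_univ, Fintype.card_prod, Fintype.card_fin]
  push_cast [wt, apply_ite]
  field_simp

theorem stmt8_general (K d : ℕ)
    (f₁ : (Fin K → ZMod 3) → ℝ) (g₁ g₂ : (Fin K × Fin d → ZMod 3) → ℝ) :
    ∑ x : Fin K → ZMod 3, ∑ y : Fin K × Fin d → ZMod 3, ∑ z : Fin K × Fin d → ZMod 3,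
        (wt x y z : ℂ) * (f₁ x : ℂ) * (g₁ y : ℂ) * (g₂ z : ℂ)
      = ∑ α : Fin K × Fin d → ZMod 3,
          fhat (fun x => (f₁ x : ℂ)) (pi3 α) * fhat (fun y => (g₁ y : ℂ)) α
            * fhat (fun z => (g₂ z : ℂ)) α * (-(1 : ℂ)/2) ^ nsupp α := by
  simp only [fhat_eq_sum_stdAddChar, Fintype.card_fin, Fintype.card_prod, sum_div]
  simp only [sum_mul_sum_mul_sum]
  simp only [wt_eq_sum, sum_mul, mul_sum]
  rw [eq_comm, sum_comm]
  refine sum_congr rfl fun x _ => ?_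
  rw [sum_comm]
  refine sum_congr rfl fun y _ => ?_
  rw [sum_comm]
  refine sum_congr rfl fun z _ => sum_congr rfl fun α _ => ?_
  rw [show (9 : ℂ) = 3 * 3 by norm_num, mul_pow]
  field_simp

/-- Three-function Fourier expansion: for real-valued `f₁, g₁, g₂`,
`E[f₁(x)g₁(y)g₂(z)] = Σ_α f̂₁(π₃(α))·ĝ₁(α)·ĝ₂(α)·(−1/2)^{#α}`. -/
theorem stmt8 (K d : ℕ) (hK : 0 < K) (hd : 1 ≤ d)
    (f₁ : (Fin K → ZMod 3) → ℝ) (g₁ g₂ : (Fin K × Fin d → ZMod 3) → ℝ) :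
    ∑ x : Fin K → ZMod 3, ∑ y : Fin K × Fin d → ZMod 3, ∑ z : Fin K × Fin d → ZMod 3,
        (wt x y z : ℂ) * (f₁ x : ℂ) * (g₁ y : ℂ) * (g₂ z : ℂ)
      = ∑ α : Fin K × Fin d → ZMod 3,
          fhat (fun x => (f₁ x : ℂ)) (pi3 α) * fhat (fun y => (g₁ y : ℂ)) α
            * fhat (fun z => (g₂ z : ℂ)) α * (-(1 : ℂ)/2) ^ nsupp α :=
  stmt8_general K d f₁ g₁ g₂
end
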